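/- Let d ≥ 1, γ > β > 0, a, b ∈ ℝ, set K(z) = a·G_γ(z) + b·G_β(z), and let μ ≠ 0 satisfy 1/μ = a/(√π·√γ) + b/(√π·√β). Then for every unit vector ν ∈ ℝ^d and every V₀ > 0: lim_{α → 0⁺} (1/α²)·∫_{{z ∈ ℝ^d : 0 ≤ ν·z ≤ α·V₀}} K(z)·|ν·z| dz = V₀²/(4μ). -/

import Mathlib

open Real MeasureTheory Filter Topology
open scoped RealInnerProductSpace

/-- The `d`-dimensional heat kernel `G_t(z) = (4πt)^{-d/2} exp(-|z|²/(4t))`. -/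
noncomputable def heatKE (d : ℕ) (t : ℝ) (z : EuclideanSpace ℝ (Fin d)) : ℝ :=
  (4 * Real.pi * t) ^ (-(d : ℝ) / 2) * Real.exp (-‖z‖ ^ 2 / (4 * t))

/-! Rotating `ν` to a coordinate axis makes the Gaussian factorise, so the marginal of the heat
kernel `G_t` along `ν` is the one-dimensional heat kernel `(4πt)^{-1/2} e^{-y²/(4t)}`. The slab
integral is then `(4πt)^{-1/2} ∫₀^s y e^{-y²/(4t)} dy = √(t/π) (1 - e^{-s²/(4t)})`, which for
`s = αV₀` equals `α² V₀² / (4√π√t) + o(α²)`. Weighting the two kernels by `a` and `b` gives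
`V₀²/4 · (a/(√π√γ) + b/(√π√β)) = V₀²/(4μ)`. -/

lemma integral_exp_neg_sq_div {t : ℝ} (ht : 0 < t) :
    ∫ y : ℝ, exp (-y ^ 2 / (4 * t)) = √(4 * π * t) := by
  have h : ∀ y : ℝ, -y ^ 2 / (4 * t) = -(4 * t)⁻¹ * y ^ 2 := fun y => by ring
  simp_rw [h, integral_gaussian]
  congr 1
  field_simp

lemma integral_mul_exp_neg_sq_div {t : ℝ} (ht : t ≠ 0) (s : ℝ) :
    ∫ y in (0 : ℝ)..s, y * exp (-y ^ 2 / (4 * t)) = 2 * t * (1 - exp (-s ^ 2 / (4 * t))) := by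
  have hderiv : ∀ y, HasDerivAt (fun y => -2 * t * exp (-y ^ 2 / (4 * t)))
      (y * exp (-y ^ 2 / (4 * t))) y := fun y => by
    refine (((hasDerivAt_pow 2 y).neg.div_const (4 * t)).exp.const_mul (-2 * t)).congr_deriv ?_
    simp only [Pi.neg_apply, Nat.cast_ofNat]
    field_simp
    ring
  rw [intervalIntegral.integral_eq_sub_of_hasDerivAt (fun y _ => hderiv y)
    (by apply Continuous.intervalIntegrable; fun_prop)]
  rw [zero_pow two_ne_zero, neg_zero, zero_div, exp_zero]
  ring

lemma integral_exp_neg_norm_sq_div_mul_apply {ι : Type*} [Fintype ι] [DecidableEq ι] (i₀ : ι)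
    {t : ℝ} (ht : 0 < t) (f : ℝ → ℝ) :
    √(4 * π * t) * ∫ x : EuclideanSpace ℝ ι, exp (-‖x‖ ^ 2 / (4 * t)) * f (x i₀) =
      √(4 * π * t) ^ Fintype.card ι * ∫ y, exp (-y ^ 2 / (4 * t)) * f y := by
  set G : ℝ → ℝ := fun y => exp (-y ^ 2 / (4 * t))
  set F : ι → ℝ → ℝ := Function.update (fun _ => G) i₀ (fun y => G y * f y)
  have hF₀ : F i₀ = fun y => G y * f y := Function.update_self _ _ _
  have hF : ∀ i ∈ Finset.univ.erase i₀, F i = G := fun i hi =>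
    Function.update_of_ne (Finset.ne_of_mem_erase hi) _ _
  have hprod : ∀ x : ι → ℝ,
      exp (-‖WithLp.toLp 2 x‖ ^ 2 / (4 * t)) * f (x i₀) = ∏ i, F i (x i) := by
    intro x
    have hexp : exp (-‖WithLp.toLp 2 x‖ ^ 2 / (4 * t)) = ∏ i, G (x i) := by
      simp only [EuclideanSpace.norm_sq_eq, G, ← exp_sum, neg_div, Finset.sum_div,
        Finset.sum_neg_distrib, Real.norm_eq_abs, sq_abs]
    rw [hexp, ← Finset.mul_prod_erase _ _ (Finset.mem_univ i₀),
      ← Finset.mul_prod_erase _ _ (Finset.mem_univ i₀),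
      Finset.prod_congr rfl fun i hi => congrFun (hF i hi) (x i), hF₀]
    ring
  rw [← (PiLp.volume_preserving_toLp ι).integral_comp
    (MeasurableEquiv.toLp 2 _).measurableEmbedding]
  simp only [hprod, integral_fintype_prod_volume_eq_prod]
  rw [← Finset.mul_prod_erase _ _ (Finset.mem_univ i₀),
    Finset.prod_congr rfl fun i hi => congrArg (fun g => ∫ y, g y) (hF i hi),
    Finset.prod_const, integral_exp_neg_sq_div ht, hF₀,
    ← Finset.card_univ, ← Finset.card_erase_add_one (Finset.mem_univ i₀)]
  ring

lemma integral_exp_neg_norm_sq_div_mul_inner {E : Type*} [NormedAddCommGroup E]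
    [InnerProductSpace ℝ E] [FiniteDimensional ℝ E] [MeasurableSpace E] [BorelSpace E]
    {ν : E} (hν : ‖ν‖ = 1) {t : ℝ} (ht : 0 < t) (f : ℝ → ℝ) :
    √(4 * π * t) * ∫ z : E, exp (-‖z‖ ^ 2 / (4 * t)) * f ⟪ν, z⟫ =
      √(4 * π * t) ^ Module.finrank ℝ E * ∫ y, exp (-y ^ 2 / (4 * t)) * f y := by
  have hνon : Orthonormal ℝ ((↑) : ({ν} : Set E) → E) :=
    orthonormal_subsingleton_iff.2 fun i => by rw [i.2]; exact hν
  obtain ⟨u, b, hνu, hb⟩ := hνon.exists_orthonormalBasis_extension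
  let i₀ : u := ⟨ν, hνu rfl⟩
  have hbi₀ : b i₀ = ν := by rw [hb]
  classical
  rw [← b.measurePreserving_repr_symm.integral_comp
    b.repr.symm.toHomeomorph.measurableEmbedding, Module.finrank_eq_card_basis b.toBasis]
  simp only [LinearIsometryEquiv.norm_map, ← hbi₀, ← OrthonormalBasis.repr_apply_apply,
    LinearIsometryEquiv.apply_symm_apply]
  exact integral_exp_neg_norm_sq_div_mul_apply i₀ ht f

lemma integrable_heatKE (d : ℕ) {t : ℝ} (ht : 0 < t) : Integrable (heatKE d t) := by
  have hexp : Integrable fun z : EuclideanSpace ℝ (Fin d) => exp (-(4 * t)⁻¹ * ‖z‖ ^ 2) := by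
    refine .of_integral_ne_zero ?_
    rw [GaussianFourier.integral_rexp_neg_mul_sq_norm (by positivity)]
    positivity
  refine (hexp.const_mul ((4 * π * t) ^ (-(d : ℝ) / 2))).congr (.of_forall fun z => ?_)
  simp only [heatKE]
  ring_nf

lemma integral_heatKE_mul_inner {d : ℕ} {ν : EuclideanSpace ℝ (Fin d)} (hν : ‖ν‖ = 1) {t : ℝ}
    (ht : 0 < t) (f : ℝ → ℝ) :
    ∫ z, heatKE d t z * f ⟪ν, z⟫ = (√(4 * π * t))⁻¹ * ∫ y, exp (-y ^ 2 / (4 * t)) * f y := by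
  have hnorm : (4 * π * t) ^ (-(d : ℝ) / 2) = (√(4 * π * t) ^ d)⁻¹ := by
    rw [neg_div, rpow_neg (by positivity), sqrt_eq_rpow, ← rpow_natCast, ← rpow_mul (by positivity),
      one_div_mul_eq_div]
  have hmarg := integral_exp_neg_norm_sq_div_mul_inner hν ht f
  rw [finrank_euclideanSpace_fin] at hmarg
  simp only [heatKE, hnorm]
  simp_rw [mul_assoc (√(4 * π * t) ^ d)⁻¹]
  rw [integral_const_mul]
  set J := ∫ z : EuclideanSpace ℝ (Fin d), exp (-‖z‖ ^ 2 / (4 * t)) * f ⟪ν, z⟫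
  set I := ∫ y, exp (-y ^ 2 / (4 * t)) * f y
  field_simp
  linear_combination hmarg

lemma measurableSet_slab {d : ℕ} (ν : EuclideanSpace ℝ (Fin d)) (s : ℝ) :
    MeasurableSet {z | 0 ≤ ⟪ν, z⟫ ∧ ⟪ν, z⟫ ≤ s} :=
  measurableSet_Icc.preimage (by fun_prop : Measurable fun z => ⟪ν, z⟫)

lemma indicator_slab_mul_abs_inner {d : ℕ} (ν : EuclideanSpace ℝ (Fin d)) (s : ℝ)
    (g : EuclideanSpace ℝ (Fin d) → ℝ) :
    {z | 0 ≤ ⟪ν, z⟫ ∧ ⟪ν, z⟫ ≤ s}.indicator (fun z => g z * |⟪ν, z⟫|) =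
      fun z => g z * (Set.Icc 0 s).indicator id ⟪ν, z⟫ := by
  ext z
  by_cases hz : 0 ≤ ⟪ν, z⟫ ∧ ⟪ν, z⟫ ≤ s
  · simp [Set.indicator_of_mem, hz, abs_of_nonneg hz.1]
  · simp [Set.indicator_of_notMem, hz]

lemma integrableOn_slab_heatKE_mul_abs_inner (d : ℕ) {t : ℝ} (ht : 0 < t)
    (ν : EuclideanSpace ℝ (Fin d)) (s : ℝ) :
    IntegrableOn (fun z => heatKE d t z * |⟪ν, z⟫|) {z | 0 ≤ ⟪ν, z⟫ ∧ ⟪ν, z⟫ ≤ s} := by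
  rw [← integrable_indicator_iff (measurableSet_slab ν s), indicator_slab_mul_abs_inner]
  refine (integrable_heatKE d ht).mul_bdd (c := |s|)
    ((measurable_id.indicator measurableSet_Icc).comp
      (by fun_prop : Measurable fun z => ⟪ν, z⟫)).aestronglyMeasurable (.of_forall fun z => ?_)
  by_cases hz : ⟪ν, z⟫ ∈ Set.Icc 0 s
  · rw [Set.indicator_of_mem hz, id, norm_eq_abs, abs_of_nonneg hz.1]
    exact hz.2.trans (le_abs_self s)
  · simp [Set.indicator_of_notMem hz]

lemma setIntegral_slab_heatKE_mul_abs_inner {d : ℕ} {ν : EuclideanSpace ℝ (Fin d)}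
    (hν : ‖ν‖ = 1) {t s : ℝ} (ht : 0 < t) (hs : 0 ≤ s) :
    ∫ z in {z | 0 ≤ ⟪ν, z⟫ ∧ ⟪ν, z⟫ ≤ s}, heatKE d t z * |⟪ν, z⟫| =
      √t / √π * (1 - exp (-s ^ 2 / (4 * t))) := by
  have hprofile : ∫ y, exp (-y ^ 2 / (4 * t)) * (Set.Icc 0 s).indicator id y =
      2 * t * (1 - exp (-s ^ 2 / (4 * t))) := by
    simp_rw [← Set.indicator_mul_right _ (fun y => exp (-y ^ 2 / (4 * t))) id,
      integral_indicator measurableSet_Icc, integral_Icc_eq_integral_Ioc,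
      ← intervalIntegral.integral_of_le hs, id, mul_comm (exp _)]
    exact integral_mul_exp_neg_sq_div ht.ne' s
  rw [← integral_indicator (measurableSet_slab ν s), indicator_slab_mul_abs_inner,
    integral_heatKE_mul_inner hν ht, hprofile, sqrt_mul' _ ht.le, sqrt_mul' _ pi_pos.le,
    show √4 = 2 by rw [show (4 : ℝ) = 2 ^ 2 by norm_num, sqrt_sq zero_le_two]]
  have := sq_sqrt ht.le
  set e := exp (-s ^ 2 / (4 * t))
  field_simp
  linear_combination (e - 1) * this

lemma tendsto_one_sub_exp_neg_mul_sq_div_sq (c : ℝ) :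
    Tendsto (fun x => (1 - exp (-(c * x ^ 2))) / x ^ 2) (𝓝[≠] 0) (𝓝 c) := by
  have hderiv : HasDerivAt (fun u => 1 - exp (-(c * u))) c 0 := by
    simpa using (((hasDerivAt_id (0 : ℝ)).const_mul c).neg.exp.const_sub 1)
  have hsq : Tendsto (fun x : ℝ => x ^ 2) (𝓝[≠] 0) (𝓝[≠] 0) :=
    tendsto_nhdsWithin_of_tendsto_nhds_of_eventually_within _
      (tendsto_nhdsWithin_of_tendsto_nhds (by simpa using (continuous_pow 2).tendsto (0 : ℝ)))
      (eventually_nhdsWithin_of_forall fun x hx => pow_ne_zero 2 hx)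
  refine ((hasDerivAt_iff_tendsto_slope.mp hderiv).comp hsq).congr fun x => ?_
  simp [slope_def_field]

lemma tendsto_setIntegral_slab_heatKE_mul_abs_inner {d : ℕ} {ν : EuclideanSpace ℝ (Fin d)}
    (hν : ‖ν‖ = 1) {t V₀ : ℝ} (ht : 0 < t) (hV₀ : 0 ≤ V₀) :
    Tendsto (fun α : ℝ => 1 / α ^ 2 *
        ∫ z in {z | 0 ≤ ⟪ν, z⟫ ∧ ⟪ν, z⟫ ≤ α * V₀}, heatKE d t z * |⟪ν, z⟫|)
      (𝓝[>] 0) (𝓝 (V₀ ^ 2 / (4 * (√π * √t)))) := by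
  have hlim := ((tendsto_one_sub_exp_neg_mul_sq_div_sq (V₀ ^ 2 / (4 * t))).mono_left
    (nhdsGT_le_nhdsNE 0)).const_mul (√t / √π)
  have hval : √t / √π * (V₀ ^ 2 / (4 * t)) = V₀ ^ 2 / (4 * (√π * √t)) := by
    have := sq_sqrt ht.le
    field_simp
    linear_combination V₀ ^ 2 * this
  rw [← hval]
  refine hlim.congr' (eventually_nhdsWithin_of_forall fun α (hα : 0 < α) => ?_)
  beta_reduce
  rw [setIntegral_slab_heatKE_mul_abs_inner hν ht (mul_nonneg hα.le hV₀)]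
  ring_nf

theorem stmt_17_general (d : ℕ) (γ β : ℝ) (hβ0 : 0 < β) (hβγ : β < γ)
    (a b μ : ℝ)
    (hμab : 1 / μ = a / (Real.sqrt Real.pi * Real.sqrt γ) +
      b / (Real.sqrt Real.pi * Real.sqrt β))
    (ν : EuclideanSpace ℝ (Fin d)) (hν : ‖ν‖ = 1) (V₀ : ℝ) (hV₀ : 0 < V₀) :
    Tendsto (fun α : ℝ =>
        1 / α ^ 2 * ∫ z in {z : EuclideanSpace ℝ (Fin d) | 0 ≤ ⟪ν, z⟫ ∧ ⟪ν, z⟫ ≤ α * V₀},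
          (a * heatKE d γ z + b * heatKE d β z) * |⟪ν, z⟫|)
      (𝓝[>] 0) (𝓝 (V₀ ^ 2 / (4 * μ))) := by
  have hγ0 : 0 < γ := hβ0.trans hβγ
  have hlim := ((tendsto_setIntegral_slab_heatKE_mul_abs_inner hν hγ0 hV₀.le).const_mul a).add
    ((tendsto_setIntegral_slab_heatKE_mul_abs_inner hν hβ0 hV₀.le).const_mul b)
  have hval : a * (V₀ ^ 2 / (4 * (√π * √γ))) + b * (V₀ ^ 2 / (4 * (√π * √β))) =
      V₀ ^ 2 / (4 * μ) := by
    rw [show V₀ ^ 2 / (4 * μ) = V₀ ^ 2 / 4 * (1 / μ) by ring, hμab]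
    ring
  rw [← hval]
  refine hlim.congr fun α => ?_
  simp only [add_mul, mul_assoc]
  rw [integral_add ((integrableOn_slab_heatKE_mul_abs_inner d hγ0 ν _).const_mul a)
    ((integrableOn_slab_heatKE_mul_abs_inner d hβ0 ν _).const_mul b),
    integral_const_mul, integral_const_mul]
  ring

/-- with `K = a G_γ + b G_β` and `1/μ = a/(√π√γ) + b/(√π√β)`,
`lim_{α→0⁺} α⁻²·∫_{0 ≤ ν·z ≤ αV₀} K(z)|ν·z| dz = V₀²/(4μ)`. -/
theorem stmt_17 (d : ℕ) (hd : 1 ≤ d) (γ β : ℝ) (hβ0 : 0 < β) (hβγ : β < γ)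
    (a b μ : ℝ) (hμ : μ ≠ 0)
    (hμab : 1 / μ = a / (Real.sqrt Real.pi * Real.sqrt γ) +
      b / (Real.sqrt Real.pi * Real.sqrt β))
    (ν : EuclideanSpace ℝ (Fin d)) (hν : ‖ν‖ = 1) (V₀ : ℝ) (hV₀ : 0 < V₀) :
    Tendsto (fun α : ℝ =>
        1 / α ^ 2 * ∫ z in {z : EuclideanSpace ℝ (Fin d) | 0 ≤ ⟪ν, z⟫ ∧ ⟪ν, z⟫ ≤ α * V₀},
          (a * heatKE d γ z + b * heatKE d β z) * |⟪ν, z⟫|)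
      (𝓝[>] 0) (𝓝 (V₀ ^ 2 / (4 * μ))) :=
  stmt_17_general d γ β hβ0 hβγ a b μ hμab ν hν V₀ hV₀
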